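/- arXiv:2204.03176 — 5 statements merged into one kernel-verified Lean document; each statement's English description precedes it below -/
import Mathlib

section
/- Let V : ℝ³ → ℝ be bounded and measurable and let e₀, ω ∈ ℝ satisfy e₀ + ω ≥ 0. Suppose φ : ℝ³ → ℂ is a Schwartz function such that −Δφ(x) + V(x)φ(x) + ωφ(x) = −|φ(x)|²·φ(x) for every x ∈ ℝ³, and suppose the quadratic-form lower bound ∫_{ℝ³}(|∇φ(x)|² + V(x)|φ(x)|²) dx ≥ e₀·∫_{ℝ³}|φ(x)|² dx holds. Then φ is identically zero. -/
open MeasureTheory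

noncomputable section

abbrev R3 := EuclideanSpace ℝ (Fin 3)

/-- The spatial Laplacian of `φ : ℝ³ → ℂ`, computed as the sum of the second
partial derivatives in the coordinate directions. -/
def lap (φ : R3 → ℂ) (x : R3) : ℂ :=
  ∑ i : Fin 3,
    fderiv ℝ (fun y => fderiv ℝ φ y (EuclideanSpace.single i 1)) x
      (EuclideanSpace.single i 1)

/-!
Pair the equation with `φ` in the real inner product of `ℂ` and integrate. Integration by parts
gives `∫ ⟪φ, Δφ⟫ = -∑ᵢ ∫ |∂ᵢφ|² ≤ -∫ ‖Dφ‖²`, so the equation yields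
`∫ ‖Dφ‖² + ∫ V|φ|² + ω ∫ |φ|² ≤ -∫ |φ|⁴`. With the lower bound on the quadratic form this
becomes `∫ |φ|⁴ ≤ -(e₀ + ω) ∫ |φ|² ≤ 0`, and a continuous `φ` with `∫ |φ|⁴ = 0` vanishes.
The equation also expresses `V|φ|²` through Schwartz functions, which makes it integrable.
-/

open scoped LineDeriv Laplacian RealInnerProductSpace SchwartzMap

section

variable {ι E F : Type*} [Fintype ι] [NormedAddCommGroup E] [NormedAddCommGroup F]

namespace SchwartzMap

section NormedSpace

variable [NormedSpace ℝ E] [NormedSpace ℝ F]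

theorem coe_lineDerivOp (v : E) (f : 𝓢(E, F)) :
    ⇑(∂_{v} f : 𝓢(E, F)) = fun x => fderiv ℝ f x v :=
  funext (lineDerivOp_apply_eq_fderiv v f)

variable [FiniteDimensional ℝ E] [MeasurableSpace E] [BorelSpace E]
  {μ : Measure E} [μ.IsAddHaarMeasure]

theorem integrable_norm_pow (f : 𝓢(E, F)) {p : ℕ} (hp : p ≠ 0) :
    Integrable (fun x => ‖f x‖ ^ p) μ :=
  (f.memLp p μ).integrable_norm_pow hp

theorem integrable_norm_fderiv_pow (f : 𝓢(E, F)) {p : ℕ} (hp : p ≠ 0) :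
    Integrable (fun x => ‖fderiv ℝ f x‖ ^ p) μ := by
  simpa only [fderivCLM_apply] using integrable_norm_pow (μ := μ) (fderivCLM ℝ E F f) hp

theorem eq_zero_of_integral_norm_pow_nonpos (f : 𝓢(E, F)) {p : ℕ} (hp : p ≠ 0)
    (h : ∫ x, ‖f x‖ ^ p ∂μ ≤ 0) : f = 0 := by
  have hnonneg : 0 ≤ fun x => ‖f x‖ ^ p := fun x => by positivity
  have hae := (integral_eq_zero_iff_of_nonneg hnonneg (integrable_norm_pow f hp)).1
    (h.antisymm (integral_nonneg hnonneg))
  have hzero := (f.continuous.norm.pow p).ae_eq_iff_eq μ continuous_zero |>.1 hae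
  ext x
  simpa [hp] using congrFun hzero x

end NormedSpace

end SchwartzMap

section InnerProductSpace

variable [InnerProductSpace ℝ E]

theorem ContinuousLinearMap.opNorm_sq_le_sum_sq_apply_orthonormalBasis [NormedSpace ℝ F]
    (b : OrthonormalBasis ι ℝ E) (L : E →L[ℝ] F) : ‖L‖ ^ 2 ≤ ∑ i, ‖L (b i)‖ ^ 2 := by
  refine (Real.le_sqrt (norm_nonneg L) (by positivity)).1 <|
    L.opNorm_le_bound (Real.sqrt_nonneg _) fun v => ?_
  calc ‖L v‖ = ‖∑ i, ⟪b i, v⟫ • L (b i)‖ := by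
        conv_lhs => rw [← b.sum_repr' v]
        simp only [map_sum, map_smul]
    _ ≤ ∑ i, ‖⟪b i, v⟫‖ * ‖L (b i)‖ := (norm_sum_le _ _).trans_eq (by simp only [norm_smul])
    _ ≤ √(∑ i, ‖⟪b i, v⟫‖ ^ 2) * √(∑ i, ‖L (b i)‖ ^ 2) := Real.sum_mul_le_sqrt_mul_sqrt _ _ _
    _ = √(∑ i, ‖L (b i)‖ ^ 2) * ‖v‖ := by
        rw [b.sum_sq_norm_inner_right, Real.sqrt_sq (norm_nonneg v), mul_comm]

namespace SchwartzMap

variable [FiniteDimensional ℝ E] [MeasurableSpace E] [BorelSpace E]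
  {μ : Measure E} [μ.IsAddHaarMeasure]

theorem integral_norm_fderiv_sq_le [NormedSpace ℝ F] (b : OrthonormalBasis ι ℝ E)
    (f : 𝓢(E, F)) : ∫ x, ‖fderiv ℝ f x‖ ^ 2 ∂μ ≤ ∑ i, ∫ x, ‖∂_{b i} f x‖ ^ 2 ∂μ := by
  rw [← integral_finsetSum _ fun i _ => integrable_norm_pow _ two_ne_zero]
  refine integral_mono (integrable_norm_fderiv_pow f two_ne_zero)
    (integrable_finsetSum _ fun i _ => integrable_norm_pow _ two_ne_zero) fun x => ?_
  simpa only [lineDerivOp_apply_eq_fderiv] using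
    (fderiv ℝ f x).opNorm_sq_le_sum_sq_apply_orthonormalBasis b

variable [InnerProductSpace ℝ F]

theorem integrable_inner (f g : 𝓢(E, F)) : Integrable (fun x => ⟪f x, g x⟫) μ :=
  (pairing (innerSL ℝ) f g).integrable

theorem integral_inner_laplacian_self (b : OrthonormalBasis ι ℝ E) (f : 𝓢(E, F)) :
    ∫ x, ⟪f x, Δ f x⟫ ∂μ = -∑ i, ∫ x, ‖∂_{b i} f x‖ ^ 2 ∂μ := by
  simp_rw [laplacian_eq_sum b, sum_apply, inner_sum]
  rw [integral_finsetSum _ fun i _ => integrable_inner _ _, ← Finset.sum_neg_distrib]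
  refine Finset.sum_congr rfl fun i _ => ?_
  calc ∫ x, ⟪f x, ∂_{b i} (∂_{b i} f) x⟫ ∂μ = -∫ x, ⟪∂_{b i} f x, ∂_{b i} f x⟫ ∂μ :=
        integral_bilinear_lineDerivOp_right_eq_neg_left f _ (innerSL ℝ) (b i)
    _ = -∫ x, ‖∂_{b i} f x‖ ^ 2 ∂μ := by simp_rw [real_inner_self_eq_norm_sq]

end SchwartzMap

end InnerProductSpace

end

theorem lap_eq_laplacian (φ : 𝓢(R3, ℂ)) : lap φ = Δ φ := by
  ext x
  simp [lap, SchwartzMap.laplacian_eq_sum (EuclideanSpace.basisFun (Fin 3) ℝ),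
    SchwartzMap.coe_lineDerivOp]

theorem stmt0_general (V : R3 → ℝ) (e₀ ω : ℝ) (hω : 0 ≤ e₀ + ω) (φ : SchwartzMap R3 ℂ)
    (heq : ∀ x, -(lap (⇑φ) x) + (V x : ℂ) * φ x + (ω : ℂ) * φ x
      = -((‖φ x‖ : ℂ) ^ 2) * φ x)
    (hform : e₀ * ∫ x, ‖φ x‖ ^ 2 ≤ ∫ x, (‖fderiv ℝ (⇑φ) x‖ ^ 2 + V x * ‖φ x‖ ^ 2)) :
    ∀ x, φ x = 0 := by
  have hI2 : Integrable fun x => ‖φ x‖ ^ 2 := φ.integrable_norm_pow two_ne_zero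
  have hI4 : Integrable fun x => ‖φ x‖ ^ 4 := φ.integrable_norm_pow four_ne_zero
  have hIΔ : Integrable fun x => ⟪φ x, Δ φ x⟫ := φ.integrable_inner (Δ φ)
  have hpot : ∀ x, V x * ‖φ x‖ ^ 2 = ⟪φ x, Δ φ x⟫ - ω * ‖φ x‖ ^ 2 - ‖φ x‖ ^ 4 := fun x => by
    have hΔ : Δ φ x = (V x + ω + ‖φ x‖ ^ 2) • φ x := by
      rw [← congrFun (lap_eq_laplacian φ) x, Complex.real_smul]
      push_cast
      linear_combination -(heq x)
    rw [hΔ, real_inner_smul_right, real_inner_self_eq_norm_sq]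
    ring
  have hIΔω : Integrable fun x => ⟪φ x, Δ φ x⟫ - ω * ‖φ x‖ ^ 2 := hIΔ.sub (hI2.const_mul ω)
  have hIpot : Integrable fun x => V x * ‖φ x‖ ^ 2 :=
    (hIΔω.sub hI4).congr (.of_forall fun x => (hpot x).symm)
  have hpot_eq : ∫ x, V x * ‖φ x‖ ^ 2 =
      (∫ x, ⟪φ x, Δ φ x⟫) - ω * (∫ x, ‖φ x‖ ^ 2) - ∫ x, ‖φ x‖ ^ 4 := by
    simp_rw [hpot]
    rw [integral_sub hIΔω hI4, integral_sub hIΔ (hI2.const_mul ω), integral_const_mul]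
  have hibp := φ.integral_inner_laplacian_self (μ := volume) (EuclideanSpace.basisFun _ ℝ)
  have hgrad := φ.integral_norm_fderiv_sq_le (μ := volume) (EuclideanSpace.basisFun _ ℝ)
  rw [integral_add (φ.integrable_norm_fderiv_pow two_ne_zero) hIpot] at hform
  have hquartic : ∫ x, ‖φ x‖ ^ 4 ≤ 0 := by
    linarith [mul_nonneg hω (integral_nonneg fun x => by positivity : 0 ≤ ∫ x, ‖φ x‖ ^ 2)]
  simp [φ.eq_zero_of_integral_norm_pow_nonpos four_ne_zero hquartic]

/-- Nonexistence of solitary waves for the defocusing cubic NLS with potential: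
if `V` is bounded and measurable, `e₀ + ω ≥ 0`, `φ` is a Schwartz solution of
`-Δφ + Vφ + ωφ = -|φ|²φ`, and the quadratic form of `-Δ + V` is bounded below by `e₀`
at `φ`, then `φ ≡ 0`. -/
theorem stmt0 (V : R3 → ℝ) (hVmeas : Measurable V) (hVbd : ∃ C, ∀ x, |V x| ≤ C)
    (e₀ ω : ℝ) (hω : 0 ≤ e₀ + ω) (φ : SchwartzMap R3 ℂ)
    (heq : ∀ x, -(lap (⇑φ) x) + (V x : ℂ) * φ x + (ω : ℂ) * φ x
      = -((‖φ x‖ : ℂ) ^ 2) * φ x)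
    (hform : e₀ * ∫ x, ‖φ x‖ ^ 2 ≤ ∫ x, (‖fderiv ℝ (⇑φ) x‖ ^ 2 + V x * ‖φ x‖ ^ 2)) :
    ∀ x, φ x = 0 :=
  stmt0_general V e₀ ω hω φ heq hform

end
end

section
/- Let α, β ∈ ℝ with 0 < α < 1 < β, and define f : (0,∞) → ℝ by f(t) = min(t^{−α}, t^{−β}). Then there exists a constant C > 0 such that for every t > 0, ∫₀ᵗ f(t−s)·f(s) ds ≤ C · f(t). -/
open MeasureTheory Set

private noncomputable def Fk (α β t : ℝ) : ℝ := min (t ^ (-α)) (t ^ (-β))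

private lemma Fk_nonneg (α β : ℝ) {t : ℝ} (ht : 0 ≤ t) : 0 ≤ Fk α β t :=
  le_min (Real.rpow_nonneg ht _) (Real.rpow_nonneg ht _)

private lemma Fk_contOn (α β : ℝ) : ContinuousOn (Fk α β) (Set.Ioi (0:ℝ)) := by
  have h : ∀ γ : ℝ, ContinuousOn (fun x : ℝ => x ^ (-γ)) (Set.Ioi (0:ℝ)) := by
    intro γ
    apply ContinuousOn.rpow_const continuousOn_id
    intro x hx
    exact Or.inl (ne_of_gt hx)
  exact fun x hx => ((h α) x hx).min ((h β) x hx)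

private lemma Fk_anti (α β : ℝ) (hα : 0 < α) (hβ : 0 < β) {a b : ℝ} (ha : 0 < a) (hab : a ≤ b) :
    Fk α β b ≤ Fk α β a :=
  min_le_min (Real.rpow_le_rpow_of_nonpos ha hab (by linarith))
    (Real.rpow_le_rpow_of_nonpos ha hab (by linarith))

private lemma Fk_double (α β : ℝ) (hα : 0 < α) (hαβ : α ≤ β) {t : ℝ} (ht : 0 < t) :
    Fk α β (t / 2) ≤ 2 ^ β * Fk α β t := by
  have h2 : ∀ γ : ℝ, (t / 2) ^ (-γ) = 2 ^ γ * t ^ (-γ) := by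
    intro γ
    rw [div_eq_mul_inv, Real.mul_rpow ht.le (by norm_num), Real.inv_rpow (by norm_num),
      ← Real.rpow_neg (by norm_num), neg_neg, mul_comm]
  have hba : (2:ℝ) ^ α ≤ 2 ^ β := Real.rpow_le_rpow_of_exponent_le one_le_two hαβ
  unfold Fk
  rw [h2 α, h2 β]
  rcases le_total (2 ^ β * t ^ (-α)) (2 ^ β * t ^ (-β)) with h | h
  · calc min (2 ^ α * t ^ (-α)) (2 ^ β * t ^ (-β)) ≤ 2 ^ α * t ^ (-α) := min_le_left _ _
      _ ≤ 2 ^ β * t ^ (-α) := by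
          exact mul_le_mul_of_nonneg_right hba (Real.rpow_nonneg ht.le _)
      _ = 2 ^ β * min (t ^ (-α)) (t ^ (-β)) := by
          rw [min_eq_left]
          exact le_of_mul_le_mul_left h (by positivity)
  · calc min (2 ^ α * t ^ (-α)) (2 ^ β * t ^ (-β)) ≤ 2 ^ β * t ^ (-β) := min_le_right _ _
      _ = 2 ^ β * min (t ^ (-α)) (t ^ (-β)) := by
          rw [min_eq_right]
          exact le_of_mul_le_mul_left h (by positivity)

private lemma Fk_integrableOn (α β : ℝ) (h0 : 0 < α) (h1 : α < 1) (h2 : 1 < β) :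
    IntegrableOn (Fk α β) (Ioi (0:ℝ)) := by
  have hu : IntegrableOn (Fk α β) (Ioc (0:ℝ) 1) := by
    have hmaj : IntegrableOn (fun s : ℝ => s ^ (-α)) (Ioc (0:ℝ) 1) := by
      have := intervalIntegral.intervalIntegrable_rpow' (a := (0:ℝ)) (b := 1)
        (show (-1:ℝ) < -α by linarith)
      rwa [intervalIntegrable_iff_integrableOn_Ioc_of_le zero_le_one] at this
    refine hmaj.mono' (((Fk_contOn α β).mono Set.Ioc_subset_Ioi_self).aestronglyMeasurable
      measurableSet_Ioc) ?_
    filter_upwards [ae_restrict_mem measurableSet_Ioc] with s hs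
    rw [Real.norm_eq_abs, abs_of_nonneg (Fk_nonneg α β hs.1.le)]
    exact min_le_left _ _
  have hv : IntegrableOn (Fk α β) (Ioi (1:ℝ)) := by
    have hmaj : IntegrableOn (fun s : ℝ => s ^ (-β)) (Ioi (1:ℝ)) :=
      integrableOn_Ioi_rpow_of_lt (by linarith) one_pos
    refine hmaj.mono' (((Fk_contOn α β).mono (Set.Ioi_subset_Ioi zero_le_one)).aestronglyMeasurable
      measurableSet_Ioi) ?_
    filter_upwards [ae_restrict_mem measurableSet_Ioi] with s hs
    rw [Real.norm_eq_abs, abs_of_nonneg (Fk_nonneg α β (by linarith [hs.out]))]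
    exact min_le_right _ _
  have := hu.union hv
  rwa [Ioc_union_Ioi_eq_Ioi zero_le_one] at this

/-- Convolution-type kernel estimate: for `0 < α < 1 < β` and
`f t = min (t ^ (-α)) (t ^ (-β))`, there is `C > 0` with
`∫₀ᵗ f (t - s) * f s ds ≤ C * f t` for all `t > 0`. -/
theorem stmt1 (α β : ℝ) (h0 : 0 < α) (h1 : α < 1) (h2 : 1 < β) :
    ∃ C > 0, ∀ t > (0 : ℝ),
      (∫ s in Set.Ioo (0 : ℝ) t,
        min ((t - s) ^ (-α)) ((t - s) ^ (-β)) * min (s ^ (-α)) (s ^ (-β)))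
        ≤ C * min (t ^ (-α)) (t ^ (-β)) := by
  have hαβ : α ≤ β := by linarith
  set F := Fk α β with hF
  have hFint := Fk_integrableOn α β h0 h1 h2
  set I : ℝ := ∫ s in Ioi (0:ℝ), F s with hI
  have hI0 : 0 ≤ I := by
    apply setIntegral_nonneg measurableSet_Ioi
    intro s hs; exact Fk_nonneg α β (le_of_lt hs)
  refine ⟨2 * 2 ^ β * (I + 1), by positivity, ?_⟩
  intro t ht
  have hFt : 0 ≤ F t := Fk_nonneg α β ht.le
  show (∫ s in Ioo (0:ℝ) t, F (t - s) * F s) ≤ 2 * 2 ^ β * (I + 1) * F t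
  by_cases hInt : IntegrableOn (fun s => F (t - s) * F s) (Ioo 0 t)
  · -- integrability of the two pieces
    have hIooSub : Ioo (0:ℝ) t ⊆ Ioi 0 := Ioo_subset_Ioi_self
    have hFIoo : IntegrableOn F (Ioo (0:ℝ) t) := hFint.mono_set hIooSub
    have hFIoc : IntegrableOn F (Ioc (0:ℝ) t) := hFint.mono_set Ioc_subset_Ioi_self
    have hFsub : IntegrableOn (fun s => F (t - s)) (Ioo (0:ℝ) t) := by
      have hii : IntervalIntegrable F volume 0 t := by
        rwa [intervalIntegrable_iff_integrableOn_Ioc_of_le ht.le]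
      have := (hii.comp_sub_left t).symm
      simp only [sub_zero, sub_self] at this
      rw [intervalIntegrable_iff_integrableOn_Ioc_of_le ht.le] at this
      exact this.mono_set Ioo_subset_Ioc_self
    -- integral of shifted equals integral
    have hshift : (∫ s in Ioo (0:ℝ) t, F (t - s)) = ∫ s in Ioo (0:ℝ) t, F s := by
      rw [← integral_Ioc_eq_integral_Ioo, ← integral_Ioc_eq_integral_Ioo,
        ← intervalIntegral.integral_of_le ht.le, ← intervalIntegral.integral_of_le ht.le,
        intervalIntegral.integral_comp_sub_left]
      norm_num
    -- pointwise bound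
    have hpt : ∀ s ∈ Ioo (0:ℝ) t, F (t - s) * F s ≤ 2 ^ β * F t * (F s + F (t - s)) := by
      intro s hs
      obtain ⟨hs0, hst⟩ := hs
      have hts : 0 < t - s := by linarith
      have hD : F (t / 2) ≤ 2 ^ β * F t := Fk_double α β h0 hαβ ht
      have hFs : 0 ≤ F s := Fk_nonneg α β hs0.le
      have hFts : 0 ≤ F (t - s) := Fk_nonneg α β hts.le
      rcases le_total s (t / 2) with hc | hc
      · have : F (t - s) ≤ 2 ^ β * F t :=
          le_trans (Fk_anti α β h0 (by linarith) (by linarith) (by linarith)) hD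
        calc F (t - s) * F s ≤ (2 ^ β * F t) * F s := mul_le_mul_of_nonneg_right this hFs
          _ ≤ 2 ^ β * F t * (F s + F (t - s)) := by nlinarith [Real.rpow_nonneg (le_of_lt (zero_lt_two)) β]
      · have : F s ≤ 2 ^ β * F t :=
          le_trans (Fk_anti α β h0 (by linarith) (by linarith) hc) hD
        calc F (t - s) * F s ≤ F (t - s) * (2 ^ β * F t) := mul_le_mul_of_nonneg_left this hFts
          _ ≤ 2 ^ β * F t * (F s + F (t - s)) := by nlinarith [Real.rpow_nonneg (le_of_lt (zero_lt_two)) β]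
    have hmono : (∫ s in Ioo (0:ℝ) t, F (t - s) * F s)
        ≤ ∫ s in Ioo (0:ℝ) t, 2 ^ β * F t * (F s + F (t - s)) := by
      refine setIntegral_mono_on hInt ?_ measurableSet_Ioo hpt
      exact ((hFIoo.add hFsub).const_mul _)
    have hIoobound : (∫ s in Ioo (0:ℝ) t, F s) ≤ I := by
      refine setIntegral_mono_set hFint ?_ (HasSubset.Subset.eventuallyLE hIooSub)
      filter_upwards [ae_restrict_mem measurableSet_Ioi] with s hs
      exact Fk_nonneg α β (le_of_lt hs)
    calc (∫ s in Ioo (0:ℝ) t, F (t - s) * F s)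
        ≤ ∫ s in Ioo (0:ℝ) t, 2 ^ β * F t * (F s + F (t - s)) := hmono
      _ = 2 ^ β * F t * ((∫ s in Ioo (0:ℝ) t, F s) + ∫ s in Ioo (0:ℝ) t, F (t - s)) := by
          rw [integral_const_mul, integral_add hFIoo hFsub]
      _ = 2 ^ β * F t * (2 * ∫ s in Ioo (0:ℝ) t, F s) := by rw [hshift]; ring
      _ ≤ 2 ^ β * F t * (2 * (I + 1)) := by
          have h2b : (0:ℝ) ≤ 2 ^ β * F t := by positivity
          exact mul_le_mul_of_nonneg_left (by linarith) h2b
      _ = 2 * 2 ^ β * (I + 1) * F t := by ring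
  · rw [integral_undef hInt]
    positivity
end

section
/- Let V : ℝ³ → ℝ be differentiable, with V and x·∇V bounded on ℝ³ and both continuous at the origin. Let Q : ℝ³ → ℝ be differentiable with Q, ∇Q ∈ L²(ℝ³), Q ∈ L⁴(ℝ³), M(Q) > 0, G(Q) > 0 and 2H₀(Q) = 3G(Q) (so that K₀,₂(Q) = 0 and E₀(Q) = G(Q)/2 > 0). Then for every ε > 0 there exists μ' > 0 such that for every μ ∈ (0, μ'] there exists a function φ : ℝ³ → ℂ, differentiable with φ, ∇φ ∈ L²(ℝ³) and φ ∈ L⁴(ℝ³), satisfying M(φ) ≤ μ, K_{V,2}(φ) ≤ 0, G(φ) ≥ 1 and I_V(φ) ≤ μ^{−1}·E₀(Q)·M(Q) + (V(0) + ε)·μ. -/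
open MeasureTheory

noncomputable section

/-- Mass: `M(φ) = (1/2) ∫ |φ|²`. -/
def Mfun {E : Type*} [NormedAddCommGroup E] (φ : R3 → E) : ℝ :=
  (1 / 2) * ∫ x, ‖φ x‖ ^ 2

/-- Kinetic energy: `H₀(φ) = (1/2) ∫ |∇φ|²`. -/
def H0 {E : Type*} [NormedAddCommGroup E] [NormedSpace ℝ E] (φ : R3 → E) : ℝ :=
  (1 / 2) * ∫ x, ‖fderiv ℝ φ x‖ ^ 2

/-- Quartic functional: `G(φ) = (1/4) ∫ |φ|⁴`. -/
def Gfun {E : Type*} [NormedAddCommGroup E] (φ : R3 → E) : ℝ :=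
  (1 / 4) * ∫ x, ‖φ x‖ ^ 4

/-- Free energy: `E₀(φ) = H₀(φ) - G(φ)`. -/
def E0 {E : Type*} [NormedAddCommGroup E] [NormedSpace ℝ E] (φ : R3 → E) : ℝ :=
  H0 φ - Gfun φ

/-- The radial derivative of the potential: `(x·∇V)(x) = ⟨x, ∇V(x)⟩ = (DV(x))(x)`. -/
def xdV (V : R3 → ℝ) (x : R3) : ℝ := fderiv ℝ V x x

/-- Free virial functional: `K₀,₂(φ) = 2H₀(φ) - 3G(φ)`. -/
def K02 {E : Type*} [NormedAddCommGroup E] [NormedSpace ℝ E] (φ : R3 → E) : ℝ :=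
  2 * H0 φ - 3 * Gfun φ

/-- Virial functional with potential:
`K_{V,2}(φ) = 2H₀(φ) - 3G(φ) - (1/2) ∫ (x·∇V) |φ|²`. -/
def K2 {E : Type*} [NormedAddCommGroup E] [NormedSpace ℝ E]
    (V : R3 → ℝ) (φ : R3 → E) : ℝ :=
  2 * H0 φ - 3 * Gfun φ - (1 / 2) * ∫ x, xdV V x * ‖φ x‖ ^ 2

/-- `I_V(φ) = (1/2)G(φ) + (1/4) ∫ ((x·∇V) + 2V) |φ|²`. -/
def IV {E : Type*} [NormedAddCommGroup E] (V : R3 → ℝ) (φ : R3 → E) : ℝ :=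
  (1 / 2) * Gfun φ + (1 / 4) * ∫ x, (xdV V x + 2 * V x) * ‖φ x‖ ^ 2

/-- Energy with potential: `E_V(φ) = H₀(φ) + (1/2)∫ V|φ|² - G(φ)`. -/
def EV {E : Type*} [NormedAddCommGroup E] [NormedSpace ℝ E]
    (V : R3 → ℝ) (φ : R3 → E) : ℝ :=
  H0 φ + (1 / 2) * ∫ x, V x * ‖φ x‖ ^ 2 - Gfun φ

/-!
The competitor is the rescaled ground state `x ↦ A Q(λx)` with `A² = sλ²` and `λ = sM(Q)/μ`:
its mass is exactly `μ`, its quartic energy is `s³M(Q)G(Q)/μ`, and each potential term becomes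
the weight `W(y/λ)` integrated against `|Q(y)|²`, which tends to `2W(0)M(Q)` as `λ → ∞` by
dominated convergence. Small `μ` forces `λ` to be large and `G ≥ 1`. Since `(x·∇V)(0) = 0`,
taking `s = 1 + εμ²/(7M(Q)G(Q))` slightly above `1` creates a virial defect
`2H₀ - 3G = -3εs²μ/7` that absorbs the potential term of `K_{V,2}`, while raising `G/2` by at
most `εμ/2`.
-/

open Filter Topology

def scaledProfile {E : Type*} [SMul ℝ E] (A c : ℝ) (Q : E → ℝ) (x : E) : ℂ :=
  ((A * Q (c • x) : ℝ) : ℂ)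

section ScaledProfile

variable {E : Type*} [NormedAddCommGroup E] [NormedSpace ℝ E] {Q : E → ℝ} {A c : ℝ}

lemma norm_scaledProfile (x : E) : ‖scaledProfile A c Q x‖ = |A| * ‖Q (c • x)‖ := by
  rw [scaledProfile, Complex.norm_real, norm_mul, Real.norm_eq_abs]

lemma hasFDerivAt_scaledProfile {x : E} (hQ : DifferentiableAt ℝ Q (c • x)) :
    HasFDerivAt (scaledProfile A c Q)
      (Complex.ofRealCLM.comp ((A * c) • fderiv ℝ Q (c • x))) x := by
  have h := ((hQ.hasFDerivAt.comp x ((hasFDerivAt_id x).const_smul c)).const_mul A)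
  refine (Complex.ofRealCLM.hasFDerivAt.comp x h).congr_fderiv ?_
  ext v
  simp [mul_assoc]

lemma differentiable_scaledProfile (hQ : Differentiable ℝ Q) :
    Differentiable ℝ (scaledProfile A c Q) :=
  fun x => (hasFDerivAt_scaledProfile (hQ (c • x))).differentiableAt

lemma norm_fderiv_scaledProfile (hQ : Differentiable ℝ Q) (x : E) :
    ‖fderiv ℝ (scaledProfile A c Q) x‖ = |A * c| * ‖fderiv ℝ Q (c • x)‖ := by
  rw [(hasFDerivAt_scaledProfile (hQ (c • x))).fderiv,
    show Complex.ofRealCLM = Complex.ofRealLI.toContinuousLinearMap from rfl,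
    LinearIsometry.norm_toContinuousLinearMap_comp, norm_smul, Real.norm_eq_abs]

end ScaledProfile

section Scaling

variable {Q : R3 → ℝ} {A c : ℝ}

lemma integral_comp_smul_of_pos_R3 (F : R3 → ℝ) (hc : 0 < c) :
    ∫ x, F (c • x) = (c ^ 3)⁻¹ * ∫ y, F y := by
  rw [Measure.integral_comp_smul_of_nonneg volume F c (hR := hc.le)]
  simp [smul_eq_mul]

lemma integral_norm_pow_scaledProfile (hc : 0 < c) (n : ℕ) :
    ∫ x, ‖scaledProfile A c Q x‖ ^ n = |A| ^ n / c ^ 3 * ∫ y, ‖Q y‖ ^ n := by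
  simp_rw [norm_scaledProfile, mul_pow]
  rw [integral_const_mul, integral_comp_smul_of_pos_R3 (fun y => ‖Q y‖ ^ n) hc]
  ring

lemma Mfun_scaledProfile (hc : 0 < c) : Mfun (scaledProfile A c Q) = A ^ 2 / c ^ 3 * Mfun Q := by
  rw [Mfun, Mfun, integral_norm_pow_scaledProfile hc, sq_abs]
  ring

lemma Gfun_scaledProfile (hc : 0 < c) : Gfun (scaledProfile A c Q) = A ^ 4 / c ^ 3 * Gfun Q := by
  rw [Gfun, Gfun, integral_norm_pow_scaledProfile hc, Even.pow_abs (by decide)]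
  ring

lemma H0_scaledProfile (hQ : Differentiable ℝ Q) (hc : 0 < c) :
    H0 (scaledProfile A c Q) = A ^ 2 / c * H0 Q := by
  simp_rw [H0, norm_fderiv_scaledProfile hQ, mul_pow]
  rw [integral_const_mul, integral_comp_smul_of_pos_R3 (fun y => ‖fderiv ℝ Q y‖ ^ 2) hc,
    sq_abs]
  field_simp

lemma integral_mul_norm_sq_scaledProfile (W : R3 → ℝ) (hc : 0 < c) :
    ∫ x, W x * ‖scaledProfile A c Q x‖ ^ 2
      = A ^ 2 / c ^ 3 * ∫ y, W (c⁻¹ • y) * ‖Q y‖ ^ 2 := by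
  have h : ∀ x : R3, W x * ‖scaledProfile A c Q x‖ ^ 2
      = A ^ 2 * (W (c⁻¹ • c • x) * ‖Q (c • x)‖ ^ 2) := fun x => by
    rw [norm_scaledProfile, inv_smul_smul₀ hc.ne', mul_pow, sq_abs]
    ring
  simp_rw [h]
  rw [integral_const_mul,
    integral_comp_smul_of_pos_R3 (fun y => W (c⁻¹ • y) * ‖Q y‖ ^ 2) hc]
  ring

lemma integrable_norm_pow_scaledProfile {n : ℕ} (h : Integrable fun x => ‖Q x‖ ^ n)
    (hc : c ≠ 0) :
    Integrable fun x => ‖scaledProfile A c Q x‖ ^ n := by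
  simp_rw [norm_scaledProfile, mul_pow]
  exact (h.comp_smul hc).const_mul _

lemma integrable_norm_fderiv_sq_scaledProfile (hQ : Differentiable ℝ Q)
    (h : Integrable fun x => ‖fderiv ℝ Q x‖ ^ 2) (hc : c ≠ 0) :
    Integrable fun x => ‖fderiv ℝ (scaledProfile A c Q) x‖ ^ 2 := by
  simp_rw [norm_fderiv_scaledProfile hQ, mul_pow]
  exact (h.comp_smul hc).const_mul _

end Scaling

lemma tendsto_integral_comp_inv_smul_mul {E : Type*} [NormedAddCommGroup E] [NormedSpace ℝ E]
    [MeasurableSpace E] [BorelSpace E] {μ : Measure E} {W g : E → ℝ} (hW : Measurable W)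
    (hWbd : ∃ C, ∀ x, |W x| ≤ C) (hW0 : ContinuousAt W 0) (hg : Integrable g μ) :
    Tendsto (fun t : ℝ => ∫ y, W (t⁻¹ • y) * g y ∂μ) atTop (𝓝 (W 0 * ∫ y, g y ∂μ)) := by
  obtain ⟨C, hC⟩ := hWbd
  rw [← integral_const_mul]
  refine tendsto_integral_filter_of_dominated_convergence (fun y => C * ‖g y‖)
    (Eventually.of_forall fun t =>
      ((hW.comp (measurable_const_smul t⁻¹)).aestronglyMeasurable.mul hg.1))
    (Eventually.of_forall fun t => ae_of_all _ fun y => ?_) (hg.norm.const_mul C)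
    (ae_of_all _ fun y => ?_)
  · rw [norm_mul, Real.norm_eq_abs]
    exact mul_le_mul_of_nonneg_right (hC _) (norm_nonneg _)
  · have hy : Tendsto (fun t : ℝ => t⁻¹ • y) atTop (𝓝 0) := by
      simpa using (tendsto_inv_atTop_zero (𝕜 := ℝ)).smul_const y
    exact (hW0.tendsto.comp hy).mul_const _

lemma measurable_xdV (V : R3 → ℝ) : Measurable (xdV V) :=
  isBoundedBilinearMap_apply.continuous.measurable.comp
    ((measurable_fderiv ℝ V).prodMk measurable_id)

lemma xdV_zero (V : R3 → ℝ) : xdV V 0 = 0 := (fderiv ℝ V 0).map_zero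

def dilatedWeightedMass (W Q : R3 → ℝ) (t : ℝ) : ℝ := ∫ y, W (t⁻¹ • y) * ‖Q y‖ ^ 2

lemma tendsto_dilatedWeightedMass {W Q : R3 → ℝ} (hW : Measurable W)
    (hWbd : ∃ C, ∀ x, |W x| ≤ C) (hW0 : ContinuousAt W 0)
    (hQ2 : Integrable fun x => ‖Q x‖ ^ 2) :
    Tendsto (dilatedWeightedMass W Q) atTop (𝓝 (W 0 * (2 * Mfun Q))) := by
  have hmass : ∫ y, ‖Q y‖ ^ 2 = 2 * Mfun Q := by rw [Mfun]; ring
  rw [← hmass]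
  exact tendsto_integral_comp_inv_smul_mul hW hWbd hW0 hQ2

lemma eventually_dilatedWeightedMass_potential {V Q : R3 → ℝ} (hV : Differentiable ℝ V)
    (hVbd : ∃ C, ∀ x, |V x| ≤ C) (hxdVbd : ∃ C, ∀ x, |xdV V x| ≤ C)
    (hVc : ContinuousAt V 0) (hxdVc : ContinuousAt (xdV V) 0)
    (hQ2 : Integrable fun x => ‖Q x‖ ^ 2) {δ : ℝ} (hδ : 0 < δ) :
    ∀ᶠ t in atTop, -δ < dilatedWeightedMass (xdV V) Q t ∧
      dilatedWeightedMass (fun x => xdV V x + 2 * V x) Q t < 4 * Mfun Q * V 0 + δ := by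
  obtain ⟨C₁, hC₁⟩ := hxdVbd
  obtain ⟨C₂, hC₂⟩ := hVbd
  have hbd : ∀ x, |xdV V x + 2 * V x| ≤ C₁ + 2 * C₂ := fun x =>
    (abs_add_le _ _).trans (by rw [abs_mul, abs_two]; linarith [hC₁ x, hC₂ x])
  refine ((tendsto_dilatedWeightedMass (measurable_xdV V) ⟨C₁, hC₁⟩ hxdVc hQ2).eventually
    (Ioi_mem_nhds ?_)).and ((tendsto_dilatedWeightedMass (W := fun x => xdV V x + 2 * V x)
      ((measurable_xdV V).add (hV.continuous.measurable.const_mul 2)) ⟨_, hbd⟩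
      (hxdVc.add (hVc.const_mul 2)) hQ2).eventually (Iio_mem_nhds ?_)) <;>
  · rw [xdV_zero]
    linarith

def competitor (Q : R3 → ℝ) (s μ : ℝ) : R3 → ℂ :=
  scaledProfile (√s * (s * Mfun Q / μ)) (s * Mfun Q / μ) Q

section Competitor

variable {Q : R3 → ℝ} {s μ ε : ℝ}

lemma Mfun_competitor (hM : 0 < Mfun Q) (hs : 0 < s) (hμ : 0 < μ) :
    Mfun (competitor Q s μ) = μ := by
  rw [competitor, Mfun_scaledProfile (by positivity), mul_pow, Real.sq_sqrt hs.le]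
  field_simp

lemma Gfun_competitor (hM : 0 < Mfun Q) (hs : 0 < s) (hμ : 0 < μ) :
    Gfun (competitor Q s μ) = s ^ 3 * Mfun Q * Gfun Q / μ := by
  rw [competitor, Gfun_scaledProfile (by positivity), mul_pow,
    show √s ^ 4 = s ^ 2 by rw [pow_mul √s 2 2, Real.sq_sqrt hs.le]]
  field_simp

lemma H0_competitor (hQ : Differentiable ℝ Q) (hM : 0 < Mfun Q) (hs : 0 < s) (hμ : 0 < μ) :
    H0 (competitor Q s μ) = s ^ 2 * Mfun Q * H0 Q / μ := by
  rw [competitor, H0_scaledProfile hQ (by positivity), mul_pow, Real.sq_sqrt hs.le]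
  field_simp

lemma integral_mul_norm_sq_competitor (W : R3 → ℝ) (hM : 0 < Mfun Q) (hs : 0 < s)
    (hμ : 0 < μ) :
    ∫ x, W x * ‖competitor Q s μ x‖ ^ 2
      = μ / Mfun Q * dilatedWeightedMass W Q (s * Mfun Q / μ) := by
  rw [competitor, integral_mul_norm_sq_scaledProfile W (by positivity), mul_pow,
    Real.sq_sqrt hs.le, dilatedWeightedMass]
  field_simp

lemma K2_competitor_nonpos (V : R3 → ℝ) (hQ : Differentiable ℝ Q)
    (hPoh : 2 * H0 Q = 3 * Gfun Q) (hM : 0 < Mfun Q) (hμ : 0 < μ) (hε : 0 ≤ ε) (hs : 1 ≤ s)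
    (hexcess : (s - 1) * (7 * Mfun Q * Gfun Q) = ε * μ ^ 2)
    (hf : -(Mfun Q * ε / 2) ≤ dilatedWeightedMass (xdV V) Q (s * Mfun Q / μ)) :
    K2 V (competitor Q s μ) ≤ 0 := by
  rw [K2, H0_competitor hQ hM (by linarith) hμ, Gfun_competitor hM (by linarith) hμ,
    integral_mul_norm_sq_competitor _ hM (by linarith) hμ]
  set f := dilatedWeightedMass (xdV V) Q (s * Mfun Q / μ)
  have key : 2 * (s ^ 2 * Mfun Q * H0 Q / μ) - 3 * (s ^ 3 * Mfun Q * Gfun Q / μ)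
      - 1 / 2 * (μ / Mfun Q * f)
      = -(μ / (2 * Mfun Q)) * (6 / 7 * s ^ 2 * Mfun Q * ε + f) := by
    rw [show H0 Q = 3 / 2 * Gfun Q by linarith]
    field_simp
    linear_combination (-6 * s ^ 2 * Mfun Q) * hexcess
  rw [key]
  refine mul_nonpos_of_nonpos_of_nonneg (neg_nonpos.2 (by positivity)) ?_
  have hMε : 0 ≤ Mfun Q * ε := by positivity
  nlinarith [le_mul_of_one_le_left hMε (one_le_pow₀ hs : 1 ≤ s ^ 2)]

lemma one_le_Gfun_competitor (hM : 0 < Mfun Q) (hμ : 0 < μ) (hs : 1 ≤ s)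
    (hμMG : μ ≤ Mfun Q * Gfun Q) : 1 ≤ Gfun (competitor Q s μ) := by
  rw [Gfun_competitor hM (by linarith) hμ, le_div_iff₀ hμ, one_mul, mul_assoc]
  exact hμMG.trans (le_mul_of_one_le_left (by linarith) (one_le_pow₀ hs))

lemma IV_competitor_le (V : R3 → ℝ) (hPoh : 2 * H0 Q = 3 * Gfun Q) (hM : 0 < Mfun Q)
    (hG : 0 < Gfun Q) (hμ : 0 < μ) (hs : 1 ≤ s) (hs2 : s ≤ 2)
    (hexcess : (s - 1) * (7 * Mfun Q * Gfun Q) = ε * μ ^ 2)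
    (hh : dilatedWeightedMass (fun x => xdV V x + 2 * V x) Q (s * Mfun Q / μ)
      ≤ 4 * Mfun Q * V 0 + 2 * Mfun Q * ε) :
    IV V (competitor Q s μ) ≤ μ⁻¹ * (E0 Q * Mfun Q) + (V 0 + ε) * μ := by
  rw [IV, Gfun_competitor hM (by linarith) hμ,
    integral_mul_norm_sq_competitor _ hM (by linarith) hμ, E0,
    show H0 Q = 3 / 2 * Gfun Q by linarith]
  set h := dilatedWeightedMass (fun x => xdV V x + 2 * V x) Q (s * Mfun Q / μ)
  -- `s³ - 1 - 7 (s - 1) = (s - 1) (s - 2) (s + 3)`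
  have hcube : s ^ 3 - 1 ≤ 7 * (s - 1) := by
    nlinarith [mul_nonneg (mul_nonneg (sub_nonneg.2 hs) (sub_nonneg.2 hs2))
      (by linarith : 0 ≤ s + 3)]
  have hquartic : (s ^ 3 - 1) * (Mfun Q * Gfun Q) / (2 * μ) ≤ ε * μ / 2 :=
    calc _ ≤ 7 * (s - 1) * (Mfun Q * Gfun Q) / (2 * μ) := by gcongr
      _ = ε * μ / 2 := by
        rw [show 7 * (s - 1) * (Mfun Q * Gfun Q) = ε * μ ^ 2 by linear_combination hexcess]
        field_simp
  have hpotential : μ / Mfun Q * h / 4 ≤ (V 0 + ε / 2) * μ :=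
    calc _ ≤ μ / Mfun Q * (4 * Mfun Q * V 0 + 2 * Mfun Q * ε) / 4 := by gcongr
      _ = (V 0 + ε / 2) * μ := by field_simp; ring
  calc _ = Mfun Q * Gfun Q / (2 * μ) + (s ^ 3 - 1) * (Mfun Q * Gfun Q) / (2 * μ)
        + μ / Mfun Q * h / 4 := by ring
    _ ≤ Mfun Q * Gfun Q / (2 * μ) + ε * μ / 2 + (V 0 + ε / 2) * μ := by linarith
    _ = _ := by field_simp; ring

end Competitor

/-- Upper bound for the modified excited-state energy level: for every `ε > 0`
there is `μ' > 0` such that for all `0 < μ ≤ μ'` there is an admissible competitor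
`φ` with `M(φ) ≤ μ`, `K_{V,2}(φ) ≤ 0`, `G(φ) ≥ 1` and
`I_V(φ) ≤ μ⁻¹ E₀(Q) M(Q) + (V(0) + ε) μ`. -/
theorem stmt2 (V : R3 → ℝ) (hV : Differentiable ℝ V)
    (hVbd : ∃ C, ∀ x, |V x| ≤ C) (hxdVbd : ∃ C, ∀ x, |xdV V x| ≤ C)
    (hVc : ContinuousAt V 0) (hxdVc : ContinuousAt (xdV V) 0)
    (Q : R3 → ℝ) (hQ : Differentiable ℝ Q)
    (hQ2 : Integrable (fun x => ‖Q x‖ ^ 2))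
    (hQg : Integrable (fun x => ‖fderiv ℝ Q x‖ ^ 2))
    (hQ4 : Integrable (fun x => ‖Q x‖ ^ 4))
    (hMQ : 0 < Mfun Q) (hGQ : 0 < Gfun Q) (hPoh : 2 * H0 Q = 3 * Gfun Q) :
    ∀ ε > (0 : ℝ), ∃ μ' > (0 : ℝ), ∀ μ ∈ Set.Ioc (0 : ℝ) μ', ∃ φ : R3 → ℂ,
      Differentiable ℝ φ ∧
      Integrable (fun x => ‖φ x‖ ^ 2) ∧
      Integrable (fun x => ‖fderiv ℝ φ x‖ ^ 2) ∧
      Integrable (fun x => ‖φ x‖ ^ 4) ∧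
      Mfun φ ≤ μ ∧ K2 V φ ≤ 0 ∧ 1 ≤ Gfun φ ∧
      IV V φ ≤ μ⁻¹ * (E0 Q * Mfun Q) + (V 0 + ε) * μ := by
  intro ε hε
  have hMε : 0 < Mfun Q * ε := mul_pos hMQ hε
  obtain ⟨Λ, hΛ⟩ := eventually_atTop.1 <|
    eventually_dilatedWeightedMass_potential hV hVbd hxdVbd hVc hxdVc hQ2 (half_pos hMε)
  refine ⟨min (min (Mfun Q * Gfun Q) (Mfun Q / max Λ 1)) (min 1 (7 * Mfun Q * Gfun Q / ε)),
    by positivity, fun μ ⟨hμ, hμ'⟩ => ?_⟩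
  simp only [le_min_iff] at hμ'
  obtain ⟨⟨hμMG, hμΛ⟩, hμ1, hμε⟩ := hμ'
  set s := 1 + ε * μ ^ 2 / (7 * Mfun Q * Gfun Q) with hs_def
  have hexcess : (s - 1) * (7 * Mfun Q * Gfun Q) = ε * μ ^ 2 := by rw [hs_def]; field_simp; ring
  have hs : 1 ≤ s := le_add_of_nonneg_right (by positivity)
  have hs2 : s ≤ 2 := by
    have : ε * μ ^ 2 ≤ 7 * Mfun Q * Gfun Q :=
      calc ε * μ ^ 2 ≤ ε * μ := by gcongr; nlinarith
        _ ≤ 7 * Mfun Q * Gfun Q := by rwa [le_div_iff₀' hε] at hμε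
    linarith [(div_le_one (by positivity)).2 this]
  have hΛs : Λ ≤ s * Mfun Q / μ :=
    calc Λ ≤ max Λ 1 := le_max_left _ _
      _ ≤ Mfun Q / μ := by rwa [le_div_comm₀ (by positivity) hμ]
      _ ≤ s * Mfun Q / μ := by gcongr; exact le_mul_of_one_le_left hMQ.le hs
  have hfreq : s * Mfun Q / μ ≠ 0 := by positivity
  obtain ⟨hf, hh⟩ := hΛ _ hΛs
  exact ⟨competitor Q s μ, differentiable_scaledProfile hQ,
    integrable_norm_pow_scaledProfile hQ2 hfreq,
    integrable_norm_fderiv_sq_scaledProfile hQ hQg hfreq,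
    integrable_norm_pow_scaledProfile hQ4 hfreq, (Mfun_competitor hMQ (by linarith) hμ).le,
    K2_competitor_nonpos V hQ hPoh hMQ hμ hε.le hs hexcess hf.le,
    one_le_Gfun_competitor hMQ hμ hs hμMG,
    IV_competitor_le V hPoh hMQ hGQ hμ hs hs2 hexcess (by linarith)⟩

end
end

section
/- Let V : ℝ³ → ℝ be differentiable, with V and x·∇V bounded on ℝ³ and both continuous at the origin, and assume V(0) < 0. Let Q : ℝ³ → ℝ be differentiable with Q, ∇Q ∈ L²(ℝ³), Q ∈ L⁴(ℝ³), M(Q) > 0, G(Q) > 0 and 2H₀(Q) = 3G(Q). Then there exist a constant C ∈ (0, −V(0)) and μ* > 0 such that for every μ ∈ (0, μ*] there exists a function φ : ℝ³ → ℂ, differentiable with φ, ∇φ ∈ L²(ℝ³) and φ ∈ L⁴(ℝ³), satisfying M(φ) ≤ μ, K_{V,2}(φ) ≤ 0, G(φ) ≥ 1 and I_V(φ) ≤ μ^{−1}·E₀(Q)·M(Q) − C·μ. -/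
open MeasureTheory

noncomputable section

/-!
The competitor is the rescaled ground state `φ(x) = s l Q(l x)` with `l = s² M(Q)/μ`, so that
`M(φ) = μ`, and `s = 1 + κμ²`. As `μ → 0` the profile concentrates (`l → ∞`), and by dominated
convergence `∫ W(x/l)|Q(x)|² dx → 2 W(0) M(Q)`; since `(x·∇V)(0) = 0`, the potential part of
`K_{V,2}(φ)` vanishes in the limit. By Pohozaev, `K₀,₂(φ) = -(μ/M(Q)) · 3G(Q) l²(s² - 1)` with
`l²(s² - 1) ≥ 2κM(Q)²`, which keeps `K_{V,2}(φ) ≤ 0`. Meanwhile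
`I_V(φ) = s⁶M(Q)G(Q)/(2μ) + (μ/4M(Q)) ∫ (x·∇V + 2V)(x/l)|Q(x)|² dx`, whose first term is
`μ⁻¹E₀(Q)M(Q) + O(κμ)` and whose second tends to `V(0)μ`; taking `κ` small compared with `-V(0)`
leaves the margin `-V(0)μ/2`.
-/

open Filter Topology

lemma integral_comp_smul_R3 (f : R3 → ℝ) {l : ℝ} (hl : 0 ≤ l) :
    ∫ x, f (l • x) = (l ^ 3)⁻¹ * ∫ x, f x := by
  rw [Measure.integral_comp_smul_of_nonneg volume f l (hR := hl), finrank_euclideanSpace_fin,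
    smul_eq_mul]

def rescale (Q : R3 → ℝ) (a l : ℝ) (x : R3) : ℂ := ↑(a * Q (l • x))

section Rescale

variable {Q : R3 → ℝ} {a l : ℝ}

lemma norm_rescale (x : R3) : ‖rescale Q a l x‖ = |a| * ‖Q (l • x)‖ := by
  rw [rescale, Complex.norm_real, norm_mul, Real.norm_eq_abs]

lemma hasFDerivAt_rescale {x : R3} (hQ : DifferentiableAt ℝ Q (l • x)) :
    HasFDerivAt (rescale Q a l)
      (Complex.ofRealLI.toContinuousLinearMap.comp ((a * l) • fderiv ℝ Q (l • x))) x := by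
  have h := Complex.ofRealLI.toContinuousLinearMap.hasFDerivAt.comp x
    ((hQ.hasFDerivAt.comp x ((ContinuousLinearMap.id ℝ R3).hasFDerivAt.const_smul l)).const_mul a)
  refine h.congr_fderiv ?_
  ext v
  simp [mul_assoc]

lemma norm_fderiv_rescale (hQ : Differentiable ℝ Q) (x : R3) :
    ‖fderiv ℝ (rescale Q a l) x‖ = |a * l| * ‖fderiv ℝ Q (l • x)‖ := by
  rw [(hasFDerivAt_rescale (hQ _)).fderiv, LinearIsometry.norm_toContinuousLinearMap_comp,
    norm_smul, Real.norm_eq_abs]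

lemma differentiable_rescale (hQ : Differentiable ℝ Q) : Differentiable ℝ (rescale Q a l) :=
  fun _ => (hasFDerivAt_rescale (hQ _)).differentiableAt

lemma integrable_norm_rescale_pow {n : ℕ} (hl : l ≠ 0) (hQn : Integrable fun x => ‖Q x‖ ^ n) :
    Integrable fun x => ‖rescale Q a l x‖ ^ n := by
  simpa only [norm_rescale, mul_pow] using (hQn.comp_smul hl).const_mul (|a| ^ n)

lemma integrable_norm_fderiv_rescale_sq (hQ : Differentiable ℝ Q) (hl : l ≠ 0)
    (hQg : Integrable fun x => ‖fderiv ℝ Q x‖ ^ 2) :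
    Integrable fun x => ‖fderiv ℝ (rescale Q a l) x‖ ^ 2 := by
  simpa only [norm_fderiv_rescale hQ, mul_pow] using (hQg.comp_smul hl).const_mul (|a * l| ^ 2)

lemma integral_mul_norm_rescale_sq (W : R3 → ℝ) (hl : 0 < l) :
    ∫ x, W x * ‖rescale Q a l x‖ ^ 2 = a ^ 2 * (l ^ 3)⁻¹ * ∫ y, W (l⁻¹ • y) * ‖Q y‖ ^ 2 := by
  have h : ∀ x : R3, W x * ‖rescale Q a l x‖ ^ 2
      = a ^ 2 * (W (l⁻¹ • (l • x)) * ‖Q (l • x)‖ ^ 2) := fun x => by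
    rw [norm_rescale, smul_smul, inv_mul_cancel₀ hl.ne', one_smul, mul_pow, sq_abs]; ring
  simp_rw [h]
  rw [integral_const_mul, integral_comp_smul_R3 (fun y => W (l⁻¹ • y) * ‖Q y‖ ^ 2) hl.le,
    mul_assoc]

lemma Mfun_rescale (hl : 0 ≤ l) : Mfun (rescale Q a l) = a ^ 2 * (l ^ 3)⁻¹ * Mfun Q := by
  simp only [Mfun, norm_rescale, mul_pow, sq_abs, integral_const_mul,
    integral_comp_smul_R3 (fun y => ‖Q y‖ ^ 2) hl]
  ring

lemma Gfun_rescale (hl : 0 ≤ l) : Gfun (rescale Q a l) = a ^ 4 * (l ^ 3)⁻¹ * Gfun Q := by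
  simp only [Gfun, norm_rescale, mul_pow, Even.pow_abs (by decide : Even 4), integral_const_mul,
    integral_comp_smul_R3 (fun y => ‖Q y‖ ^ 4) hl]
  ring

lemma H0_rescale (hQ : Differentiable ℝ Q) (hl : 0 ≤ l) :
    H0 (rescale Q a l) = (a * l) ^ 2 * (l ^ 3)⁻¹ * H0 Q := by
  simp only [H0, norm_fderiv_rescale hQ, mul_pow, sq_abs, integral_const_mul,
    integral_comp_smul_R3 (fun y => ‖fderiv ℝ Q y‖ ^ 2) hl]
  ring

end Rescale

lemma tendsto_integral_comp_smul_mul {E : Type*} [NormedAddCommGroup E] [NormedSpace ℝ E]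
    [MeasurableSpace E] [BorelSpace E] {μ : Measure E} {W f : E → ℝ}
    (hWm : Measurable W) (hWb : ∃ C, ∀ x, |W x| ≤ C) (hW0 : ContinuousAt W 0)
    (hf : Integrable f μ) :
    Tendsto (fun r : ℝ => ∫ x, W (r • x) * f x ∂μ) (𝓝 0) (𝓝 (W 0 * ∫ x, f x ∂μ)) := by
  obtain ⟨C, hC⟩ := hWb
  rw [← integral_const_mul]
  refine tendsto_integral_filter_of_dominated_convergence (fun x => C * ‖f x‖)
    (Eventually.of_forall fun r => ?_) (Eventually.of_forall fun r => ?_) (hf.norm.const_mul C)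
    (Eventually.of_forall fun x => ?_)
  · exact (hWm.comp (continuous_const_smul r).measurable).aestronglyMeasurable.mul
      hf.aestronglyMeasurable
  · exact Eventually.of_forall fun x => by
      rw [norm_mul, Real.norm_eq_abs]
      exact mul_le_mul_of_nonneg_right (hC _) (norm_nonneg _)
  · have h : Tendsto (fun r : ℝ => r • x) (𝓝 0) (𝓝 0) := by
      simpa using (tendsto_id (x := 𝓝 (0 : ℝ))).smul_const x
    exact (hW0.tendsto.comp h).mul_const _

lemma K2_rescale_mul (V : R3 → ℝ) {Q : R3 → ℝ} (hQ : Differentiable ℝ Q) {s l : ℝ} (hl : 0 < l) :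
    K2 V (rescale Q (s * l) l) = s ^ 2 / l * (2 * l ^ 2 * H0 Q - 3 * s ^ 2 * l ^ 2 * Gfun Q
      - (1 / 2) * ∫ y, xdV V (l⁻¹ • y) * ‖Q y‖ ^ 2) := by
  rw [K2, H0_rescale hQ hl.le, Gfun_rescale hl.le, integral_mul_norm_rescale_sq _ hl]
  field_simp

lemma IV_rescale_mul (V : R3 → ℝ) {Q : R3 → ℝ} {s l : ℝ} (hl : 0 < l) :
    IV V (rescale Q (s * l) l) = s ^ 2 / l * ((1 / 2) * s ^ 2 * l ^ 2 * Gfun Q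
      + (1 / 4) * ∫ y, (xdV V (l⁻¹ • y) + 2 * V (l⁻¹ • y)) * ‖Q y‖ ^ 2) := by
  rw [IV, Gfun_rescale hl.le, integral_mul_norm_rescale_sq _ hl]
  field_simp

lemma one_add_pow_six_le {d : ℝ} (h₀ : 0 ≤ d) (h₁ : d ≤ 1) : (1 + d) ^ 6 ≤ 1 + 63 * d := by
  nlinarith [mul_nonneg h₀ (pow_nonneg h₀ 2), pow_le_one₀ h₀ h₁ (n := 2),
    pow_le_one₀ h₀ h₁ (n := 3), pow_le_one₀ h₀ h₁ (n := 4), pow_le_one₀ h₀ h₁ (n := 5)]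

lemma exists_competitor (V : R3 → ℝ) {Q : R3 → ℝ} (hQ : Differentiable ℝ Q)
    (hQ2 : Integrable (fun x => ‖Q x‖ ^ 2))
    (hQg : Integrable (fun x => ‖fderiv ℝ Q x‖ ^ 2))
    (hQ4 : Integrable (fun x => ‖Q x‖ ^ 4))
    (hMQ : 0 < Mfun Q) (hGQ : 0 < Gfun Q) (hPoh : 2 * H0 Q = 3 * Gfun Q)
    {v κ μ l : ℝ} (hv : 0 ≤ v) (hκ : κ = v / (126 * (Mfun Q * Gfun Q))) (hμ : 0 < μ)
    (hl : l = (1 + κ * μ ^ 2) ^ 2 * Mfun Q / μ) (hκμ : κ * μ ^ 2 ≤ 1)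
    (hμMG : μ ≤ Mfun Q * Gfun Q)
    (hK : -(12 * κ * Gfun Q * Mfun Q ^ 2) ≤ ∫ y, xdV V (l⁻¹ • y) * ‖Q y‖ ^ 2)
    (hP : ∫ y, (xdV V (l⁻¹ • y) + 2 * V (l⁻¹ • y)) * ‖Q y‖ ^ 2 ≤ -(3 * v * Mfun Q)) :
    ∃ φ : R3 → ℂ,
      Differentiable ℝ φ ∧
      Integrable (fun x => ‖φ x‖ ^ 2) ∧
      Integrable (fun x => ‖fderiv ℝ φ x‖ ^ 2) ∧
      Integrable (fun x => ‖φ x‖ ^ 4) ∧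
      Mfun φ ≤ μ ∧ K2 V φ ≤ 0 ∧ 1 ≤ Gfun φ ∧
      IV V φ ≤ μ⁻¹ * (E0 Q * Mfun Q) - v / 2 * μ := by
  obtain ⟨s, hs⟩ : ∃ s, s = 1 + κ * μ ^ 2 := ⟨_, rfl⟩
  rw [← hs] at hl
  have hκ0 : 0 ≤ κ := by rw [hκ]; positivity
  have hδ : 0 ≤ κ * μ ^ 2 := by positivity
  have hs1 : 1 ≤ s := by linarith
  have hl0 : 0 < l := hl ▸ by positivity
  have hlμ : l * μ = s ^ 2 * Mfun Q := by rw [hl]; field_simp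
  have hsl : s ^ 2 / l = μ / Mfun Q := by rw [hl]; field_simp
  have hG : Gfun (rescale Q (s * l) l) = s ^ 6 * (Mfun Q * Gfun Q) / μ := by
    rw [Gfun_rescale hl0.le, hl]
    field_simp
  refine ⟨rescale Q (s * l) l, differentiable_rescale hQ, integrable_norm_rescale_pow hl0.ne' hQ2,
    integrable_norm_fderiv_rescale_sq hQ hl0.ne' hQg, integrable_norm_rescale_pow hl0.ne' hQ4,
    ?_, ?_, ?_, ?_⟩
  · refine le_of_eq ?_
    rw [Mfun_rescale hl0.le, hl]
    field_simp
  · have hgap : 2 * κ * Mfun Q ^ 2 ≤ l ^ 2 * (s ^ 2 - 1) := by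
      have hm : Mfun Q ≤ l * μ := by
        rw [hlμ]; nlinarith [one_le_pow₀ (n := 2) hs1]
      calc 2 * κ * Mfun Q ^ 2 ≤ 2 * κ * (l * μ) ^ 2 := by gcongr
        _ ≤ l ^ 2 * (s ^ 2 - 1) := by rw [hs]; nlinarith [sq_nonneg (κ * μ ^ 2), sq_nonneg l]
    rw [K2_rescale_mul V hQ hl0]
    apply mul_nonpos_of_nonneg_of_nonpos (by positivity)
    nlinarith
  · rw [hG, le_div_iff₀ hμ]
    nlinarith [one_le_pow₀ (n := 6) hs1, mul_pos hMQ hGQ]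
  · have hκv : 63 * κ * (Mfun Q * Gfun Q) = v / 2 := by
      rw [hκ]; field_simp; ring
    have h₁ : s ^ 6 * (Mfun Q * Gfun Q) / (2 * μ) ≤ μ⁻¹ * (Gfun Q / 2 * Mfun Q) + v / 4 * μ := by
      rw [div_le_iff₀ (by positivity)]
      calc s ^ 6 * (Mfun Q * Gfun Q) ≤ (1 + 63 * (κ * μ ^ 2)) * (Mfun Q * Gfun Q) := by
            rw [hs]; gcongr; exact one_add_pow_six_le hδ hκμ
        _ = _ := by field_simp; linear_combination 4 * μ ^ 2 * hκv
    have h₂ : μ / (4 * Mfun Q) * ∫ y, (xdV V (l⁻¹ • y) + 2 * V (l⁻¹ • y)) * ‖Q y‖ ^ 2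
        ≤ -(3 / 4) * v * μ := by
      rw [div_mul_eq_mul_div, div_le_iff₀ (by positivity)]
      nlinarith
    have hIV : IV V (rescale Q (s * l) l) = s ^ 6 * (Mfun Q * Gfun Q) / (2 * μ)
        + μ / (4 * Mfun Q) * ∫ y, (xdV V (l⁻¹ • y) + 2 * V (l⁻¹ • y)) * ‖Q y‖ ^ 2 := by
      rw [IV_rescale_mul V hl0, hsl, hl]
      field_simp
    rw [hIV, E0, show H0 Q = 3 / 2 * Gfun Q by linarith]
    linarith

/-- Strict upper bound for the modified excited-state energy level when `V(0) < 0`: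
there are `C ∈ (0, -V(0))` and `μ* > 0` such that for all `0 < μ ≤ μ*` there is an
admissible competitor `φ` with `M(φ) ≤ μ`, `K_{V,2}(φ) ≤ 0`, `G(φ) ≥ 1` and
`I_V(φ) ≤ μ⁻¹ E₀(Q) M(Q) - C μ`. -/
theorem stmt3 (V : R3 → ℝ) (hV : Differentiable ℝ V)
    (hVbd : ∃ C, ∀ x, |V x| ≤ C) (hxdVbd : ∃ C, ∀ x, |xdV V x| ≤ C)
    (hVc : ContinuousAt V 0) (hxdVc : ContinuousAt (xdV V) 0)
    (hV0 : V 0 < 0)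
    (Q : R3 → ℝ) (hQ : Differentiable ℝ Q)
    (hQ2 : Integrable (fun x => ‖Q x‖ ^ 2))
    (hQg : Integrable (fun x => ‖fderiv ℝ Q x‖ ^ 2))
    (hQ4 : Integrable (fun x => ‖Q x‖ ^ 4))
    (hMQ : 0 < Mfun Q) (hGQ : 0 < Gfun Q) (hPoh : 2 * H0 Q = 3 * Gfun Q) :
    ∃ C : ℝ, 0 < C ∧ C < -V 0 ∧ ∃ μstar > (0 : ℝ), ∀ μ ∈ Set.Ioc (0 : ℝ) μstar,
      ∃ φ : R3 → ℂ,
        Differentiable ℝ φ ∧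
        Integrable (fun x => ‖φ x‖ ^ 2) ∧
        Integrable (fun x => ‖fderiv ℝ φ x‖ ^ 2) ∧
        Integrable (fun x => ‖φ x‖ ^ 4) ∧
        Mfun φ ≤ μ ∧ K2 V φ ≤ 0 ∧ 1 ≤ Gfun φ ∧
        IV V φ ≤ μ⁻¹ * (E0 Q * Mfun Q) - C * μ := by
  have hv : 0 < -V 0 := neg_pos.2 hV0
  obtain ⟨C₁, hC₁⟩ := hxdVbd
  obtain ⟨C₂, hC₂⟩ := hVbd
  set κ := -V 0 / (126 * (Mfun Q * Gfun Q))
  have hκ : 0 < κ := by positivity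
  set l : ℝ → ℝ := fun μ => (1 + κ * μ ^ 2) ^ 2 * Mfun Q / μ
  have hl : Tendsto (fun μ => (l μ)⁻¹) (𝓝 0) (𝓝 0) := by
    have h : Continuous fun μ : ℝ => μ / ((1 + κ * μ ^ 2) ^ 2 * Mfun Q) :=
      continuous_id.div (by fun_prop) fun μ => by positivity
    simpa [l, inv_div] using h.tendsto' 0 0 (by simp)
  have hK := (tendsto_integral_comp_smul_mul (measurable_xdV V) ⟨C₁, hC₁⟩ hxdVc hQ2).comp hl
  have hP := (tendsto_integral_comp_smul_mul
    ((measurable_xdV V).add (hV.continuous.measurable.const_mul 2))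
    ⟨C₁ + 2 * C₂, fun x =>
      (abs_add_le _ _).trans (by rw [abs_mul, abs_two]; linarith [hC₁ x, hC₂ x])⟩
    (hxdVc.add (hVc.const_mul 2)) hQ2).comp hl
  have hIQ : ∫ y, ‖Q y‖ ^ 2 = 2 * Mfun Q := by rw [Mfun]; ring
  simp only [Function.comp_def, Pi.add_apply, xdV_zero, zero_add, zero_mul, hIQ] at hK hP
  have hsmall : ∀ᶠ μ in 𝓝 (0 : ℝ), κ * μ ^ 2 ≤ 1 ∧ μ ≤ Mfun Q * Gfun Q ∧
      -(12 * κ * Gfun Q * Mfun Q ^ 2) ≤ ∫ y, xdV V ((l μ)⁻¹ • y) * ‖Q y‖ ^ 2 ∧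
      ∫ y, (xdV V ((l μ)⁻¹ • y) + 2 * V ((l μ)⁻¹ • y)) * ‖Q y‖ ^ 2 ≤ -(3 * -V 0 * Mfun Q) :=
    (((by fun_prop : Continuous fun μ : ℝ => κ * μ ^ 2).tendsto' 0 0 (by simp)).eventually_le_const
      one_pos).and <| (tendsto_id.eventually_le_const (mul_pos hMQ hGQ)).and <|
      (hK.eventually_const_le (by simp only [neg_lt_zero]; positivity)).and
      (hP.eventually_le_const (by nlinarith))
  obtain ⟨μstar, hμstar, hsub⟩ := mem_nhdsGT_iff_exists_Ioc_subset.1 (nhdsWithin_le_nhds hsmall)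
  refine ⟨-V 0 / 2, by linarith, by linarith, μstar, hμstar, fun μ hμ => ?_⟩
  obtain ⟨h₁, h₂, h₃, h₄⟩ := hsub hμ
  exact exists_competitor V hQ hQ2 hQg hQ4 hMQ hGQ hPoh hv.le rfl hμ.1 rfl h₁ h₂ h₃ h₄

end
end

section
/- Let u : ℝ³ → ℂ and Q : ℝ³ → ℝ be measurable functions whose functionals M, H₀, G are finite, with M(Q) > 0, G(Q) > 0 and 2H₀(Q) = 3G(Q). Suppose the sharp Gagliardo–Nirenberg bound G(u) ≤ [G(Q) / (M(Q)^{1/2}·H₀(Q)^{3/2})] · M(u)^{1/2}·H₀(u)^{3/2} holds, and let μ ∈ (0,1) be such that M(u)·G(u) < (1−μ)·M(Q)·G(Q). Then K₀,₂(u) = 2H₀(u) − 3G(u) ≥ 2·(1 − (1−μ)^{1/3})·H₀(u) ≥ (μ/3)·H₀(u). -/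
open MeasureTheory

noncomputable section

set_option maxHeartbeats 1000000
/-- Quantitative virial coercivity below the ground-state mass–energy threshold:
under the sharp Gagliardo–Nirenberg bound and `M(u)G(u) < (1-μ)M(Q)G(Q)`, one has
`K₀,₂(u) ≥ 2(1 - (1-μ)^{1/3}) H₀(u) ≥ (μ/3) H₀(u)`. -/
theorem stmt7 (u : R3 → ℂ) (Q : R3 → ℝ)
    (hum : Measurable u) (hQm : Measurable Q)
    (hu2 : Integrable (fun x => ‖u x‖ ^ 2))
    (hug : Integrable (fun x => ‖fderiv ℝ u x‖ ^ 2))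
    (hu4 : Integrable (fun x => ‖u x‖ ^ 4))
    (hQ2 : Integrable (fun x => ‖Q x‖ ^ 2))
    (hQg : Integrable (fun x => ‖fderiv ℝ Q x‖ ^ 2))
    (hQ4 : Integrable (fun x => ‖Q x‖ ^ 4))
    (hMQ : 0 < Mfun Q) (hGQ : 0 < Gfun Q) (hPoh : 2 * H0 Q = 3 * Gfun Q)
    (hGN : Gfun u ≤ (Gfun Q / (Mfun Q ^ ((1 : ℝ) / 2) * H0 Q ^ ((3 : ℝ) / 2)))
      * (Mfun u ^ ((1 : ℝ) / 2) * H0 u ^ ((3 : ℝ) / 2)))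
    (μ : ℝ) (hμ0 : 0 < μ) (hμ1 : μ < 1)
    (hsub : Mfun u * Gfun u < (1 - μ) * (Mfun Q * Gfun Q)) :
    2 * (1 - (1 - μ) ^ ((1 : ℝ) / 3)) * H0 u ≤ 2 * H0 u - 3 * Gfun u ∧
      (μ / 3) * H0 u ≤ 2 * (1 - (1 - μ) ^ ((1 : ℝ) / 3)) * H0 u := by
  have hh : 0 ≤ H0 u := mul_nonneg (by norm_num) (integral_nonneg fun x => by positivity)
  have hmu : 0 ≤ Mfun u := mul_nonneg (by norm_num) (integral_nonneg fun x => by positivity)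
  have hHQ : 0 < H0 Q := by linarith
  have h1μ : (0:ℝ) < 1 - μ := by linarith
  set t := (1 - μ) ^ ((1:ℝ)/3) with ht
  have ht0 : 0 < t := Real.rpow_pos_of_pos h1μ _
  have ht3 : t ^ 3 = 1 - μ := by
    rw [ht, ← Real.rpow_natCast ((1-μ) ^ ((1:ℝ)/3)) 3, ← Real.rpow_mul h1μ.le]
    norm_num
  have ht1 : t ≤ 1 := by nlinarith [mul_pos ht0 ht0, ht0]
  set c := Gfun Q / (Mfun Q ^ ((1:ℝ)/2) * H0 Q ^ ((3:ℝ)/2)) with hcdef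
  have hc : 0 < c :=
    div_pos hGQ (mul_pos (Real.rpow_pos_of_pos hMQ _) (Real.rpow_pos_of_pos hHQ _))
  have hAQ2 : (Mfun Q ^ ((1:ℝ)/2)) ^ 2 = Mfun Q := by
    rw [← Real.rpow_natCast (Mfun Q ^ ((1:ℝ)/2)) 2, ← Real.rpow_mul hMQ.le]; norm_num
  have hBQ2 : (H0 Q ^ ((3:ℝ)/2)) ^ 2 = H0 Q ^ 3 := by
    rw [← Real.rpow_natCast (H0 Q ^ ((3:ℝ)/2)) 2, ← Real.rpow_mul hHQ.le,
      ← Real.rpow_natCast (H0 Q) 3]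
    norm_num
  have hHQeq : H0 Q = 3/2 * Gfun Q := by linarith
  have main : 3 * Gfun u ≤ 2 * t * H0 u := by
    rcases le_or_gt (Gfun u) 0 with hg | hg
    · nlinarith [mul_nonneg ht0.le hh]
    · have hA : 0 ≤ Mfun u ^ ((1:ℝ)/2) := Real.rpow_nonneg hmu _
      have hB : 0 ≤ H0 u ^ ((3:ℝ)/2) := Real.rpow_nonneg hh _
      have hposAB : 0 < c * (Mfun u ^ ((1:ℝ)/2) * H0 u ^ ((3:ℝ)/2)) := lt_of_lt_of_le hg hGN
      have hprod : 0 < Mfun u ^ ((1:ℝ)/2) * H0 u ^ ((3:ℝ)/2) := by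
        by_contra hcon
        push_neg at hcon
        exact absurd hposAB (not_lt.2 (mul_nonpos_of_nonneg_of_nonpos hc.le hcon))
      have hApos : 0 < Mfun u ^ ((1:ℝ)/2) :=
        hA.lt_of_ne fun e => by rw [← e] at hprod; simp at hprod
      have hBpos : 0 < H0 u ^ ((3:ℝ)/2) :=
        hB.lt_of_ne fun e => by rw [← e] at hprod; nlinarith
      have hm0 : 0 < Mfun u := by
        rcases hmu.lt_or_eq with h | h
        · exact h
        · rw [← h, Real.zero_rpow (by norm_num : (1:ℝ)/2 ≠ 0)] at hApos; linarith
      have hh0 : 0 < H0 u := by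
        rcases hh.lt_or_eq with h | h
        · exact h
        · rw [← h, Real.zero_rpow (by norm_num : (3:ℝ)/2 ≠ 0)] at hBpos; linarith
      have hA2 : (Mfun u ^ ((1:ℝ)/2)) ^ 2 = Mfun u := by
        rw [← Real.rpow_natCast (Mfun u ^ ((1:ℝ)/2)) 2, ← Real.rpow_mul hmu]; norm_num
      have hB2 : (H0 u ^ ((3:ℝ)/2)) ^ 2 = H0 u ^ 3 := by
        rw [← Real.rpow_natCast (H0 u ^ ((3:ℝ)/2)) 2, ← Real.rpow_mul hh,
          ← Real.rpow_natCast (H0 u) 3]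
        norm_num
      have hsq : Gfun u ^ 2 ≤ c ^ 2 * Mfun u * H0 u ^ 3 := by
        calc Gfun u ^ 2 ≤ (c * (Mfun u ^ ((1:ℝ)/2) * H0 u ^ ((3:ℝ)/2))) ^ 2 :=
              pow_le_pow_left₀ hg.le hGN 2
          _ = c ^ 2 * (Mfun u ^ ((1:ℝ)/2)) ^ 2 * (H0 u ^ ((3:ℝ)/2)) ^ 2 := by ring
          _ = c ^ 2 * Mfun u * H0 u ^ 3 := by rw [hA2, hB2]
      have hc2 : c ^ 2 * (Mfun Q * Gfun Q) = 8/27 := by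
        have h1 : c ^ 2 = Gfun Q ^ 2 / (Mfun Q * H0 Q ^ 3) := by
          rw [hcdef, div_pow, mul_pow, hAQ2, hBQ2]
        rw [h1, hHQeq]
        field_simp
        ring
      have key : Gfun u ^ 3 < (1 - μ) * (8/27) * H0 u ^ 3 := by
        have hch : 0 < c ^ 2 * H0 u ^ 3 := by positivity
        have step1 : Gfun u ^ 3 ≤ c ^ 2 * H0 u ^ 3 * (Mfun u * Gfun u) := by
          calc Gfun u ^ 3 = Gfun u ^ 2 * Gfun u := by ring
            _ ≤ c ^ 2 * Mfun u * H0 u ^ 3 * Gfun u :=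
                mul_le_mul_of_nonneg_right hsq hg.le
            _ = c ^ 2 * H0 u ^ 3 * (Mfun u * Gfun u) := by ring
        have step2 : c ^ 2 * H0 u ^ 3 * (Mfun u * Gfun u)
            < c ^ 2 * H0 u ^ 3 * ((1 - μ) * (Mfun Q * Gfun Q)) :=
          mul_lt_mul_of_pos_left hsub hch
        have step3 : c ^ 2 * H0 u ^ 3 * ((1 - μ) * (Mfun Q * Gfun Q))
            = (1 - μ) * (8/27) * H0 u ^ 3 := by
          calc c ^ 2 * H0 u ^ 3 * ((1 - μ) * (Mfun Q * Gfun Q))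
              = (1 - μ) * (c ^ 2 * (Mfun Q * Gfun Q)) * H0 u ^ 3 := by ring
            _ = (1 - μ) * (8/27) * H0 u ^ 3 := by rw [hc2]
        linarith
      have hcube : (3 * Gfun u) ^ 3 < (2 * t * H0 u) ^ 3 := by
        calc (3 * Gfun u) ^ 3 = 27 * Gfun u ^ 3 := by ring
          _ < 27 * ((1 - μ) * (8/27) * H0 u ^ 3) := by linarith
          _ = 8 * (1 - μ) * H0 u ^ 3 := by ring
          _ = (2 * t * H0 u) ^ 3 := by rw [← ht3]; ring
      have := lt_of_pow_lt_pow_left₀ 3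
        (by positivity : (0:ℝ) ≤ 2 * t * H0 u) hcube
      linarith
  have hsnd : μ / 3 ≤ 2 * (1 - t) := by
    nlinarith [mul_nonneg (sub_nonneg.2 ht1)
      (show (0:ℝ) ≤ 5 - t - t ^ 2 by nlinarith [ht0, ht1]), ht3]
  constructor
  · linarith
  · have := mul_le_mul_of_nonneg_right hsnd hh
    calc (μ / 3) * H0 u ≤ (2 * (1 - t)) * H0 u := this
      _ = 2 * (1 - t) * H0 u := by ring

end
end
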